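/- At every point (u, v, w) with W(u) > 0, f(u) ≠ 0 and cos w ≠ 0, the second curvature of the rotational hypersurface is 𝔠₂ = φ'·(2f·ψ + φ'·W)/(3·f²·W²). -/

import Mathlib

open Real Matrix

noncomputable section

/-- A vector in Euclidean 4-space `𝔼⁴`. -/
def vec4 (a b c d : ℝ) : EuclideanSpace ℝ (Fin 4) :=
  (WithLp.equiv 2 (Fin 4 → ℝ)).symm ![a, b, c, d]

/-- Partial derivative in the `i`-th variable (`i = 0,1,2` for `u,v,w`)
of a map `ℝ³ → 𝔼⁴`. -/
def pd : Fin 3 → (ℝ → ℝ → ℝ → EuclideanSpace ℝ (Fin 4)) →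
    ℝ → ℝ → ℝ → EuclideanSpace ℝ (Fin 4)
  | 0, X, u, v, w => deriv (fun t => X t v w) u
  | 1, X, u, v, w => deriv (fun t => X u t w) v
  | 2, X, u, v, w => deriv (fun t => X u v t) w

/-- The rotational hypersurface in `𝔼⁴` generated by the profile curve
`u ↦ (f u, 0, 0, φ u)` rotated about the `x₄`-axis. -/
def rotHyp (f φ : ℝ → ℝ) (u v w : ℝ) : EuclideanSpace ℝ (Fin 4) :=
  vec4 (f u * cos v * cos w) (f u * sin v * cos w) (f u * sin w) (φ u)

/-- The Gauss map `G = W^{-1/2}·(φ'·cos v·cos w, φ'·sin v·cos w, φ'·sin w, -f')`,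
where `W = f'² + φ'²`. -/
def gaussMap (f φ : ℝ → ℝ) (u v w : ℝ) : EuclideanSpace ℝ (Fin 4) :=
  ((deriv f u ^ 2 + deriv φ u ^ 2) ^ (-(1 : ℝ) / 2)) •
    vec4 (deriv φ u * cos v * cos w) (deriv φ u * sin v * cos w)
      (deriv φ u * sin w) (-deriv f u)

/-- The first fundamental form matrix `I = (⟨∂ᵢx, ∂ⱼx⟩)ᵢⱼ`. -/
def firstFF (f φ : ℝ → ℝ) (u v w : ℝ) : Matrix (Fin 3) (Fin 3) ℝ :=
  Matrix.of fun i j => (inner ℝ (pd i (rotHyp f φ) u v w) (pd j (rotHyp f φ) u v w) : ℝ)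

/-- The second fundamental form matrix `II = (⟨∂ᵢ∂ⱼx, G⟩)ᵢⱼ`. -/
def secondFF (f φ : ℝ → ℝ) (u v w : ℝ) : Matrix (Fin 3) (Fin 3) ℝ :=
  Matrix.of fun i j => (inner ℝ (pd i (pd j (rotHyp f φ)) u v w) (gaussMap f φ u v w) : ℝ)

/-- The third fundamental form matrix `III = (⟨∂ᵢG, ∂ⱼG⟩)ᵢⱼ`. -/
def thirdFF (f φ : ℝ → ℝ) (u v w : ℝ) : Matrix (Fin 3) (Fin 3) ℝ :=
  Matrix.of fun i j => (inner ℝ (pd i (gaussMap f φ) u v w) (pd j (gaussMap f φ) u v w) : ℝ)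

/-- The shape operator matrix `S = I⁻¹ · II`. -/
def shapeOp (f φ : ℝ → ℝ) (u v w : ℝ) : Matrix (Fin 3) (Fin 3) ℝ :=
  (firstFF f φ u v w)⁻¹ * secondFF f φ u v w

/-- The fourth fundamental form matrix `IV = III · S`. -/
def fourthFF (f φ : ℝ → ℝ) (u v w : ℝ) : Matrix (Fin 3) (Fin 3) ℝ :=
  thirdFF f φ u v w * shapeOp f φ u v w

lemma inner_vec4 (a b c d a' b' c' d' : ℝ) :
    (inner ℝ (vec4 a b c d) (vec4 a' b' c' d') : ℝ) = a*a' + b*b' + c*c' + d*d' := by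
  simp [vec4, PiLp.inner_apply, Fin.sum_univ_four, RCLike.inner_apply]
  ring

lemma hasDerivAt_vec4 {a b c d : ℝ → ℝ} {a' b' c' d' t : ℝ}
    (ha : HasDerivAt a a' t) (hb : HasDerivAt b b' t)
    (hc : HasDerivAt c c' t) (hd : HasDerivAt d d' t) :
    HasDerivAt (fun t => vec4 (a t) (b t) (c t) (d t)) (vec4 a' b' c' d') t := by
  have hpi : HasDerivAt (fun t => ![a t, b t, c t, d t]) (![a', b', c', d']) t := by
    rw [hasDerivAt_pi]
    intro i
    fin_cases i
    · simpa using ha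
    · simpa using hb
    · simpa using hc
    · simpa using hd
  exact ((EuclideanSpace.equiv (Fin 4) ℝ).symm.toContinuousLinearMap.hasFDerivAt.comp_hasDerivAt
    t hpi)

lemma pd0_rotHyp (f φ : ℝ → ℝ) (hf : ContDiff ℝ (⊤ : ℕ∞) f) (hφ : ContDiff ℝ (⊤ : ℕ∞) φ) :
    pd 0 (rotHyp f φ) = fun u v w =>
      vec4 (deriv f u * cos v * cos w) (deriv f u * sin v * cos w) (deriv f u * sin w)
        (deriv φ u) := by
  funext u v w
  show deriv (fun t => rotHyp f φ t v w) u = _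
  simp only [rotHyp]
  exact (hasDerivAt_vec4
    ((((hf.differentiable (by simp)).differentiableAt.hasDerivAt).mul_const (cos v)).mul_const (cos w))
    ((((hf.differentiable (by simp)).differentiableAt.hasDerivAt).mul_const (sin v)).mul_const (cos w))
    (((hf.differentiable (by simp)).differentiableAt.hasDerivAt).mul_const (sin w))
    ((hφ.differentiable (by simp)).differentiableAt.hasDerivAt)).deriv

lemma pd1_rotHyp (f φ : ℝ → ℝ) :
    pd 1 (rotHyp f φ) = fun u v w =>
      vec4 (f u * -sin v * cos w) (f u * cos v * cos w) 0 0 := by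
  funext u v w
  show deriv (fun t => rotHyp f φ u t w) v = _
  simp only [rotHyp]
  exact (hasDerivAt_vec4
    (((hasDerivAt_cos v).const_mul (f u)).mul_const (cos w))
    (((hasDerivAt_sin v).const_mul (f u)).mul_const (cos w))
    (hasDerivAt_const v (f u * sin w))
    (hasDerivAt_const v (φ u))).deriv

lemma pd2_rotHyp (f φ : ℝ → ℝ) :
    pd 2 (rotHyp f φ) = fun u v w =>
      vec4 (f u * cos v * -sin w) (f u * sin v * -sin w) (f u * cos w) 0 := by
  funext u v w
  show deriv (fun t => rotHyp f φ u v t) w = _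
  simp only [rotHyp]
  exact (hasDerivAt_vec4
    ((hasDerivAt_cos w).const_mul (f u * cos v))
    ((hasDerivAt_cos w).const_mul (f u * sin v))
    ((hasDerivAt_sin w).const_mul (f u))
    (hasDerivAt_const w (φ u))).deriv


/-- At every point with `W = f'² + φ'² > 0`, `f(u) ≠ 0` and
`cos w ≠ 0`, the second curvature of the rotational hypersurface — defined by the
characteristic polynomial identity `det(S - λ·1) = -λ³ + 3c₁λ² - 3c₂λ + c₃` — is
`c₂ = φ'·(2f·ψ + φ'·W)/(3·f²·W²)`, where `ψ = f'·φ'' - f''·φ'`. -/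
theorem rotHyp_second_curvature (f φ : ℝ → ℝ) (hf : ContDiff ℝ (⊤ : ℕ∞) f) (hφ : ContDiff ℝ (⊤ : ℕ∞) φ)
    (u v w : ℝ) (hW : 0 < deriv f u ^ 2 + deriv φ u ^ 2)
    (hfu : f u ≠ 0) (hw : cos w ≠ 0) (c₁ c₂ c₃ : ℝ)
    (hchar : ∀ lam : ℝ,
      (shapeOp f φ u v w - lam • (1 : Matrix (Fin 3) (Fin 3) ℝ)).det
        = -lam ^ 3 + 3 * c₁ * lam ^ 2 - 3 * c₂ * lam + c₃) :
    c₂ = deriv φ u *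
          (2 * f u * (deriv f u * deriv (deriv φ) u - deriv (deriv f) u * deriv φ u)
            + deriv φ u * (deriv f u ^ 2 + deriv φ u ^ 2))
        / (3 * f u ^ 2 * (deriv f u ^ 2 + deriv φ u ^ 2) ^ 2) := by
  have hv := sin_sq_add_cos_sq v
  have hww := sin_sq_add_cos_sq w
  have h1le : (1 : WithTop ℕ∞) ≤ ((⊤:ℕ∞) : WithTop ℕ∞) := by exact_mod_cast le_top
  have hf' : ContDiff ℝ ((⊤:ℕ∞) : WithTop ℕ∞) (deriv f) := (contDiff_infty_iff_deriv.mp (hf.of_le (by simp))).2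
  have hφ' : ContDiff ℝ ((⊤:ℕ∞) : WithTop ℕ∞) (deriv φ) := (contDiff_infty_iff_deriv.mp (hφ.of_le (by simp))).2
  have Df : ∀ t, HasDerivAt f (deriv f t) t :=
    fun t => ((hf.differentiable (by simp)) t).hasDerivAt
  have Df' : HasDerivAt (deriv f) (deriv (deriv f) u) u :=
    ((hf'.differentiable (by simp)) u).hasDerivAt
  have Dφ' : HasDerivAt (deriv φ) (deriv (deriv φ) u) u :=
    ((hφ'.differentiable (by simp)) u).hasDerivAt
  have P0 := pd0_rotHyp f φ hf hφ
  have P1 := pd1_rotHyp f φ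
  have P2 := pd2_rotHyp f φ
  set F := f u with hF
  set F1 := deriv f u with hF1
  set F2 := deriv (deriv f) u with hF2
  set Q1 := deriv φ u with hQ1
  set Q2 := deriv (deriv φ) u with hQ2
  set W := F1 ^ 2 + Q1 ^ 2 with hWdef
  set s := W ^ (-(1 : ℝ) / 2) with hs
  -- first fundamental form
  have e00 : firstFF f φ u v w 0 0 = W := by
    simp only [firstFF, Matrix.of_apply, P0, inner_vec4]
    linear_combination (F1 ^ 2 * cos w ^ 2) * hv + F1 ^ 2 * hww
  have e01 : firstFF f φ u v w 0 1 = 0 := by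
    simp only [firstFF, Matrix.of_apply, P0, P1, inner_vec4]; ring
  have e02 : firstFF f φ u v w 0 2 = 0 := by
    simp only [firstFF, Matrix.of_apply, P0, P2, inner_vec4]
    linear_combination (-(F * F1 * sin w * cos w)) * hv
  have e10 : firstFF f φ u v w 1 0 = 0 := by
    simp only [firstFF, Matrix.of_apply, P0, P1, inner_vec4]; ring
  have e11 : firstFF f φ u v w 1 1 = F ^ 2 * cos w ^ 2 := by
    simp only [firstFF, Matrix.of_apply, P1, inner_vec4]
    linear_combination (F ^ 2 * cos w ^ 2) * hv
  have e12 : firstFF f φ u v w 1 2 = 0 := by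
    simp only [firstFF, Matrix.of_apply, P1, P2, inner_vec4]; ring
  have e20 : firstFF f φ u v w 2 0 = 0 := by
    simp only [firstFF, Matrix.of_apply, P0, P2, inner_vec4]
    linear_combination (-(F * F1 * sin w * cos w)) * hv
  have e21 : firstFF f φ u v w 2 1 = 0 := by
    simp only [firstFF, Matrix.of_apply, P1, P2, inner_vec4]; ring
  have e22 : firstFF f φ u v w 2 2 = F ^ 2 := by
    simp only [firstFF, Matrix.of_apply, P2, inner_vec4]
    linear_combination (F ^ 2 * sin w ^ 2) * hv + F ^ 2 * hww
  have hI : firstFF f φ u v w = Matrix.diagonal ![W, F ^ 2 * cos w ^ 2, F ^ 2] := by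
    ext i j
    fin_cases i <;> fin_cases j
    · exact e00
    · exact e01
    · exact e02
    · exact e10
    · exact e11
    · exact e12
    · exact e20
    · exact e21
    · exact e22
  -- second partial derivatives
  have h00 : pd 0 (pd 0 (rotHyp f φ)) u v w =
      vec4 (F2 * cos v * cos w) (F2 * sin v * cos w) (F2 * sin w) Q2 := by
    rw [P0]
    show deriv (fun t => vec4 (deriv f t * cos v * cos w) (deriv f t * sin v * cos w)
      (deriv f t * sin w) (deriv φ t)) u = _
    exact (hasDerivAt_vec4 ((Df'.mul_const (cos v)).mul_const (cos w))
      ((Df'.mul_const (sin v)).mul_const (cos w)) (Df'.mul_const (sin w)) Dφ').deriv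
  have h01 : pd 0 (pd 1 (rotHyp f φ)) u v w =
      vec4 (F1 * -sin v * cos w) (F1 * cos v * cos w) 0 0 := by
    rw [P1]
    show deriv (fun t => vec4 (f t * -sin v * cos w) (f t * cos v * cos w) 0 0) u = _
    exact (hasDerivAt_vec4 (((Df u).mul_const (-sin v)).mul_const (cos w))
      (((Df u).mul_const (cos v)).mul_const (cos w))
      (hasDerivAt_const u (0:ℝ)) (hasDerivAt_const u (0:ℝ))).deriv
  have h02 : pd 0 (pd 2 (rotHyp f φ)) u v w =
      vec4 (F1 * cos v * -sin w) (F1 * sin v * -sin w) (F1 * cos w) 0 := by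
    rw [P2]
    show deriv (fun t => vec4 (f t * cos v * -sin w) (f t * sin v * -sin w) (f t * cos w) 0) u = _
    exact (hasDerivAt_vec4 (((Df u).mul_const (cos v)).mul_const (-sin w))
      (((Df u).mul_const (sin v)).mul_const (-sin w))
      ((Df u).mul_const (cos w)) (hasDerivAt_const u (0:ℝ))).deriv
  have h10 : pd 1 (pd 0 (rotHyp f φ)) u v w =
      vec4 (F1 * -sin v * cos w) (F1 * cos v * cos w) 0 0 := by
    rw [P0]
    show deriv (fun t => vec4 (deriv f u * cos t * cos w) (deriv f u * sin t * cos w)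
      (deriv f u * sin w) (deriv φ u)) v = _
    exact (hasDerivAt_vec4 (((hasDerivAt_cos v).const_mul (deriv f u)).mul_const (cos w))
      (((hasDerivAt_sin v).const_mul (deriv f u)).mul_const (cos w))
      (hasDerivAt_const v (deriv f u * sin w)) (hasDerivAt_const v (deriv φ u))).deriv
  have h11 : pd 1 (pd 1 (rotHyp f φ)) u v w =
      vec4 (F * -cos v * cos w) (F * -sin v * cos w) 0 0 := by
    rw [P1]
    show deriv (fun t => vec4 (f u * -sin t * cos w) (f u * cos t * cos w) 0 0) v = _
    exact (hasDerivAt_vec4 ((((hasDerivAt_sin v).neg).const_mul (f u)).mul_const (cos w))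
      (((hasDerivAt_cos v).const_mul (f u)).mul_const (cos w))
      (hasDerivAt_const v (0:ℝ)) (hasDerivAt_const v (0:ℝ))).deriv
  have h12 : pd 1 (pd 2 (rotHyp f φ)) u v w =
      vec4 (F * -sin v * -sin w) (F * cos v * -sin w) 0 0 := by
    rw [P2]
    show deriv (fun t => vec4 (f u * cos t * -sin w) (f u * sin t * -sin w) (f u * cos w) 0) v = _
    exact (hasDerivAt_vec4 (((hasDerivAt_cos v).const_mul (f u)).mul_const (-sin w))
      (((hasDerivAt_sin v).const_mul (f u)).mul_const (-sin w))
      (hasDerivAt_const v (f u * cos w)) (hasDerivAt_const v (0:ℝ))).deriv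
  have h20 : pd 2 (pd 0 (rotHyp f φ)) u v w =
      vec4 (F1 * cos v * -sin w) (F1 * sin v * -sin w) (F1 * cos w) 0 := by
    rw [P0]
    show deriv (fun t => vec4 (deriv f u * cos v * cos t) (deriv f u * sin v * cos t)
      (deriv f u * sin t) (deriv φ u)) w = _
    exact (hasDerivAt_vec4 ((hasDerivAt_cos w).const_mul (deriv f u * cos v))
      ((hasDerivAt_cos w).const_mul (deriv f u * sin v))
      ((hasDerivAt_sin w).const_mul (deriv f u)) (hasDerivAt_const w (deriv φ u))).deriv
  have h21 : pd 2 (pd 1 (rotHyp f φ)) u v w =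
      vec4 (F * -sin v * -sin w) (F * cos v * -sin w) 0 0 := by
    rw [P1]
    show deriv (fun t => vec4 (f u * -sin v * cos t) (f u * cos v * cos t) 0 0) w = _
    exact (hasDerivAt_vec4 ((hasDerivAt_cos w).const_mul (f u * -sin v))
      ((hasDerivAt_cos w).const_mul (f u * cos v))
      (hasDerivAt_const w (0:ℝ)) (hasDerivAt_const w (0:ℝ))).deriv
  have h22 : pd 2 (pd 2 (rotHyp f φ)) u v w =
      vec4 (F * cos v * -cos w) (F * sin v * -cos w) (F * -sin w) 0 := by
    rw [P2]
    show deriv (fun t => vec4 (f u * cos v * -sin t) (f u * sin v * -sin t) (f u * cos t) 0) w = _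
    exact (hasDerivAt_vec4 (((hasDerivAt_sin w).neg).const_mul (f u * cos v))
      (((hasDerivAt_sin w).neg).const_mul (f u * sin v))
      ((hasDerivAt_cos w).const_mul (f u)) (hasDerivAt_const w (0:ℝ))).deriv
  -- second fundamental form
  have g00 : secondFF f φ u v w 0 0 = s * (F2 * Q1 - Q2 * F1) := by
    simp only [secondFF, Matrix.of_apply, h00, gaussMap, real_inner_smul_right, inner_vec4]
    rw [← hWdef, ← hs]
    linear_combination (s * (F2 * Q1) * cos w ^ 2) * hv + (s * (F2 * Q1)) * hww
  have g01 : secondFF f φ u v w 0 1 = 0 := by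
    simp only [secondFF, Matrix.of_apply, h01, gaussMap, real_inner_smul_right, inner_vec4]
    ring
  have g02 : secondFF f φ u v w 0 2 = 0 := by
    simp only [secondFF, Matrix.of_apply, h02, gaussMap, real_inner_smul_right, inner_vec4]
    rw [← hWdef, ← hs]
    linear_combination (-(s * Q1 * F1 * sin w * cos w)) * hv
  have g10 : secondFF f φ u v w 1 0 = 0 := by
    simp only [secondFF, Matrix.of_apply, h10, gaussMap, real_inner_smul_right, inner_vec4]
    ring
  have g11 : secondFF f φ u v w 1 1 = s * (-(F * Q1) * cos w ^ 2) := by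
    simp only [secondFF, Matrix.of_apply, h11, gaussMap, real_inner_smul_right, inner_vec4]
    rw [← hWdef, ← hs]
    linear_combination (s * (-(F * Q1)) * cos w ^ 2) * hv
  have g12 : secondFF f φ u v w 1 2 = 0 := by
    simp only [secondFF, Matrix.of_apply, h12, gaussMap, real_inner_smul_right, inner_vec4]
    ring
  have g20 : secondFF f φ u v w 2 0 = 0 := by
    simp only [secondFF, Matrix.of_apply, h20, gaussMap, real_inner_smul_right, inner_vec4]
    rw [← hWdef, ← hs]
    linear_combination (-(s * Q1 * F1 * sin w * cos w)) * hv
  have g21 : secondFF f φ u v w 2 1 = 0 := by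
    simp only [secondFF, Matrix.of_apply, h21, gaussMap, real_inner_smul_right, inner_vec4]
    ring
  have g22 : secondFF f φ u v w 2 2 = s * (-(F * Q1)) := by
    simp only [secondFF, Matrix.of_apply, h22, gaussMap, real_inner_smul_right, inner_vec4]
    rw [← hWdef, ← hs]
    linear_combination (s * (-(F * Q1)) * cos w ^ 2) * hv + (s * (-(F * Q1))) * hww
  have hII : secondFF f φ u v w =
      Matrix.diagonal ![s * (F2 * Q1 - Q2 * F1), s * (-(F * Q1) * cos w ^ 2), s * (-(F * Q1))] := by
    ext i j
    fin_cases i <;> fin_cases j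
    · exact g00
    · exact g01
    · exact g02
    · exact g10
    · exact g11
    · exact g12
    · exact g20
    · exact g21
    · exact g22
  -- shape operator
  have hWne : W ≠ 0 := ne_of_gt hW
  have hIinv : (firstFF f φ u v w)⁻¹ =
      Matrix.diagonal ![W⁻¹, (F ^ 2 * cos w ^ 2)⁻¹, (F ^ 2)⁻¹] := by
    apply Matrix.inv_eq_right_inv
    rw [hI, Matrix.diagonal_mul_diagonal, ← Matrix.diagonal_one]
    refine congrArg Matrix.diagonal (funext fun i => ?_)
    fin_cases i <;> simp <;> field_simp <;> ring
  have hS : shapeOp f φ u v w =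
      Matrix.diagonal ![s * (F2 * Q1 - Q2 * F1) / W, -(s * Q1) / F, -(s * Q1) / F] := by
    rw [shapeOp, hIinv, hII, Matrix.diagonal_mul_diagonal]
    refine congrArg Matrix.diagonal (funext fun i => ?_)
    fin_cases i <;> simp <;> field_simp <;> ring
  set A := s * (F2 * Q1 - Q2 * F1) / W with hA
  set B := -(s * Q1) / F with hB
  have hdet : ∀ lam : ℝ, (shapeOp f φ u v w - lam • (1 : Matrix (Fin 3) (Fin 3) ℝ)).det =
      (A - lam) * ((B - lam) * (B - lam)) := by
    intro lam
    rw [hS, Matrix.smul_one_eq_diagonal, Matrix.diagonal_sub, Matrix.det_diagonal,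
      Fin.prod_univ_three]
    simp [mul_assoc]
  have h1 := (hchar 1).symm.trans (hdet 1)
  have h2 := (hchar (-1)).symm.trans (hdet (-1))
  have hsum : 3 * c₂ = A * B + B * B + B * A := by linear_combination (h2 - h1) / 2
  have hs2 : s ^ 2 * W = 1 := by
    have hh : s ^ 2 = W ^ (-(1:ℝ)) := by
      rw [hs, ← Real.rpow_natCast (W ^ (-(1:ℝ)/2)) 2, ← Real.rpow_mul hW.le]
      norm_num
    rw [hh, Real.rpow_neg_one]
    exact inv_mul_cancel₀ (ne_of_gt hW)
  have hWne : W ≠ 0 := ne_of_gt hW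
  rw [hA, hB] at hsum
  field_simp at hsum
  have key : c₂ * (3 * F ^ 2 * W ^ 2) * F ^ 2 =
      Q1 * (2 * F * (F1 * Q2 - F2 * Q1) + Q1 * W) * F ^ 2 := by
    linear_combination (W * F ^ 2) * hsum + (Q1 * (2 * F * (F1 * Q2 - F2 * Q1) + Q1 * W) * F ^ 2) * hs2
  rw [eq_div_iff (mul_ne_zero (mul_ne_zero three_ne_zero (pow_ne_zero 2 hfu))
    (pow_ne_zero 2 hWne))]
  exact mul_right_cancel₀ (pow_ne_zero 2 hfu) key

end
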